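/- Let κ ≥ 0, α_x, α_t ∈ (0,1], p ∈ C^{α_x,α_t}([0,T]×Ω̄) with 1 < p⁻ ≤ p⁺ < ∞, and let s > 1. Then there exist c_s > 0 and Δt₀ ∈ (0,1) such that for all 0 < Δt ≤ Δt₀, all σ, t ∈ [0,T] with |t − σ| ≤ Δt, all x ∈ Ω̄ and all ξ ∈ ℝ^{N×n}: |F(t,x,ξ) − F(σ,x,ξ)| ≤ c_s (Δt)^{α_t} (1 + |ξ|)^{s·p(t,x)/2}. -/

import Mathlib

/-! Since `q ↦ aᵠ` has derivative `log a · aᵠ`, the difference `|a^q₁ - a^q₂|` is at most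
`|q₁ - q₂| |log a| max (a^q₁) (a^q₂)`, and the logarithm costs only an arbitrarily small loss `e`
in the exponent: `|log a| ≤ max (aᵉ) (a⁻ᵉ) / e`. Hölder continuity of `p` in time gives
`|p(t,x) - p(σ,x)| ≤ c₀ Δt^αt`; choosing `e` small against `(s - 1) p⁻` and `Δt₀` with
`c₀ Δt₀^αt ≤ e`, the loss is paid for by the spare factor `(1 + |ξ|)^((s - 1) p / 2)`. -/

namespace Real

theorem exp_sub_exp_le_mul_exp (x y : ℝ) : exp x - exp y ≤ (x - y) * exp x := by
  have h : exp x * (y - x + 1) ≤ exp x * exp (y - x) :=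
    mul_le_mul_of_nonneg_left (add_one_le_exp _) (exp_pos x).le
  rw [← exp_add, add_sub_cancel] at h
  linarith

theorem abs_exp_sub_exp_le (x y : ℝ) : |exp x - exp y| ≤ |x - y| * max (exp x) (exp y) := by
  rw [abs_sub_le_iff]
  constructor
  · calc exp x - exp y ≤ (x - y) * exp x := exp_sub_exp_le_mul_exp x y
      _ ≤ |x - y| * max (exp x) (exp y) := by gcongr; exacts [le_abs_self _, le_max_left _ _]
  · calc exp y - exp x ≤ (y - x) * exp y := exp_sub_exp_le_mul_exp y x
      _ ≤ |x - y| * max (exp x) (exp y) := by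
        rw [abs_sub_comm]; gcongr; exacts [le_abs_self _, le_max_right _ _]

theorem abs_rpow_sub_rpow_le {a : ℝ} (ha : 0 < a) (b₁ b₂ : ℝ) :
    |a ^ b₁ - a ^ b₂| ≤ |b₁ - b₂| * (|log a| * max (a ^ b₁) (a ^ b₂)) := by
  simp only [rpow_def_of_pos ha]
  calc |exp (log a * b₁) - exp (log a * b₂)|
      ≤ |log a * b₁ - log a * b₂| * max (exp (log a * b₁)) (exp (log a * b₂)) :=
        abs_exp_sub_exp_le _ _
    _ = _ := by rw [← mul_sub, abs_mul]; ring

theorem abs_log_mul_rpow_le {a e b : ℝ} (ha : 0 < a) (he : 0 < e) (heb : e ≤ b) :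
    |log a| * a ^ b ≤ (1 + a) ^ (b + e) / e := by
  rcases le_or_gt 1 a with h1 | h1
  · calc |log a| * a ^ b ≤ a ^ e / e * a ^ b := by
          rw [abs_of_nonneg (log_nonneg h1)]
          gcongr
          exact log_le_rpow_div ha.le he
      _ = a ^ (b + e) / e := by rw [rpow_add ha]; ring
      _ ≤ (1 + a) ^ (b + e) / e := by gcongr <;> linarith
  · have hlog : -log a ≤ a ^ (-e) / e := by
      simpa [log_inv, inv_rpow ha.le, rpow_neg ha.le] using log_le_rpow_div (inv_nonneg.2 ha.le) he
    calc |log a| * a ^ b ≤ a ^ (-e) / e * a ^ b := by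
          rw [abs_of_nonpos (log_nonpos ha.le h1.le)]
          gcongr
      _ = a ^ (b - e) / e := by rw [sub_eq_neg_add, rpow_add ha]; ring
      _ ≤ 1 / e := by gcongr; exact rpow_le_one ha.le h1.le (by linarith)
      _ ≤ (1 + a) ^ (b + e) / e := by gcongr; exact one_le_rpow (by linarith) (by linarith)

theorem abs_rpow_sub_rpow_le_of_abs_sub_le {a e b₁ b₂ : ℝ} (ha : 0 < a) (he : 0 < e)
    (hb : |b₁ - b₂| ≤ e) (heb : 2 * e ≤ b₁) :
    |a ^ b₁ - a ^ b₂| ≤ |b₁ - b₂| / e * (1 + a) ^ (b₁ + 2 * e) := by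
  obtain ⟨hb₂, hb₂'⟩ := abs_sub_le_iff.1 hb
  have hmax : |log a| * max (a ^ b₁) (a ^ b₂) ≤ (1 + a) ^ (b₁ + 2 * e) / e := by
    rw [mul_max_of_nonneg _ _ (abs_nonneg _)]
    refine max_le ?_ ?_
    · calc |log a| * a ^ b₁ ≤ (1 + a) ^ (b₁ + e) / e := abs_log_mul_rpow_le ha he (by linarith)
        _ ≤ (1 + a) ^ (b₁ + 2 * e) / e := by
          gcongr (1 + a) ^ ?_ / e <;> linarith
    · calc |log a| * a ^ b₂ ≤ (1 + a) ^ (b₂ + e) / e := abs_log_mul_rpow_le ha he (by linarith)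
        _ ≤ (1 + a) ^ (b₁ + 2 * e) / e := by
          gcongr (1 + a) ^ ?_ / e <;> linarith
  calc |a ^ b₁ - a ^ b₂| ≤ |b₁ - b₂| * (|log a| * max (a ^ b₁) (a ^ b₂)) :=
        abs_rpow_sub_rpow_le ha b₁ b₂
    _ ≤ |b₁ - b₂| * ((1 + a) ^ (b₁ + 2 * e) / e) := by gcongr
    _ = |b₁ - b₂| / e * (1 + a) ^ (b₁ + 2 * e) := by ring

theorem one_add_add_rpow_le {κ r q E R : ℝ} (hκ : 0 ≤ κ) (hr : 0 ≤ r) (hq : 0 ≤ q)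
    (hqE : q ≤ E) (hqR : q ≤ R) : (1 + κ + r) ^ q ≤ (1 + κ) ^ E * (1 + r) ^ R :=
  calc (1 + κ + r) ^ q ≤ ((1 + κ) * (1 + r)) ^ q := by
        gcongr; nlinarith [mul_nonneg hκ hr]
    _ = (1 + κ) ^ q * (1 + r) ^ q := mul_rpow (by linarith) (by linarith)
    _ ≤ (1 + κ) ^ E * (1 + r) ^ R := by
        gcongr <;> linarith

theorem exists_pos_lt_one_forall_rpow_le {α ε : ℝ} (hα : 0 < α) (hε : 0 < ε) :
    ∃ δ₀ : ℝ, 0 < δ₀ ∧ δ₀ < 1 ∧ ∀ δ, 0 ≤ δ → δ ≤ δ₀ → δ ^ α ≤ ε := by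
  refine ⟨min (1 / 2) (ε ^ α⁻¹), by positivity, by norm_num, fun δ hδ hδ₀ ↦ ?_⟩
  exact (le_rpow_inv_iff_of_pos hδ hε.le hα).1 (hδ₀.trans (min_le_right _ _))

end Real

open Set Real

theorem norm_rpow_smul_sub_rpow_smul_le {E : Type*} [NormedAddCommGroup E] [NormedSpace ℝ E]
    {κ e p₁ p₂ : ℝ} (hκ : 0 ≤ κ) (he : 0 < e) (hp : |p₁ - p₂| ≤ e) (hep : 2 * e ≤ p₁) (ξ : E) :
    ‖(κ + ‖ξ‖) ^ ((p₁ - 2) / 2) • ξ - (κ + ‖ξ‖) ^ ((p₂ - 2) / 2) • ξ‖ ≤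
      |p₁ - p₂| / e * (1 + κ + ‖ξ‖) ^ (p₁ / 2 + e) := by
  rcases eq_or_ne ξ 0 with rfl | hξ
  · simp only [norm_zero, smul_zero, sub_zero]
    positivity
  set a := κ + ‖ξ‖
  have ha : 0 < a := by positivity
  have hdiff : |p₁ / 2 - p₂ / 2| = |p₁ - p₂| / 2 := by
    rw [← sub_div, abs_div, abs_two]
  rw [← sub_smul, norm_smul, norm_eq_abs]
  calc |a ^ ((p₁ - 2) / 2) - a ^ ((p₂ - 2) / 2)| * ‖ξ‖
      ≤ |a ^ ((p₁ - 2) / 2) - a ^ ((p₂ - 2) / 2)| * a := by gcongr; linarith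
    _ = |a ^ (p₁ / 2) - a ^ (p₂ / 2)| := by
        rw [← abs_of_pos ha, ← abs_mul, abs_of_pos ha, sub_mul, ← rpow_add_one ha.ne',
          ← rpow_add_one ha.ne']
        ring_nf
    _ ≤ |p₁ / 2 - p₂ / 2| / (e / 2) * (1 + a) ^ (p₁ / 2 + 2 * (e / 2)) :=
        abs_rpow_sub_rpow_le_of_abs_sub_le ha (by positivity) (by rw [hdiff]; linarith)
          (by linarith)
    _ = |p₁ - p₂| / e * (1 + κ + ‖ξ‖) ^ (p₁ / 2 + e) := by
        rw [hdiff, add_assoc]; field_simp; rfl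

theorem stmt8 (N n : ℕ) (T : ℝ)
    (Ω : Set (EuclideanSpace ℝ (Fin n)))
    (κ αx αt : ℝ) (hκ : 0 ≤ κ) (hαx : αx ∈ Ioc (0:ℝ) 1) (hαt : αt ∈ Ioc (0:ℝ) 1)
    (p : ℝ × EuclideanSpace ℝ (Fin n) → ℝ) (pminus pplus c₀ : ℝ)
    (hpm : 1 < pminus) (hc₀ : 0 ≤ c₀)
    (hbounds : ∀ z ∈ Icc (0:ℝ) T ×ˢ closure Ω, pminus ≤ p z ∧ p z ≤ pplus)
    (hHolder : ∀ t ∈ Icc (0:ℝ) T, ∀ s ∈ Icc (0:ℝ) T, ∀ x ∈ closure Ω, ∀ y ∈ closure Ω,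
      |p (t, x) - p (s, y)| ≤ c₀ * (|t - s| ^ αt + ‖x - y‖ ^ αx))
    (s : ℝ) (hs : 1 < s) :
    ∃ cs Δt₀ : ℝ, 0 < cs ∧ 0 < Δt₀ ∧ Δt₀ < 1 ∧
      ∀ Δt : ℝ, 0 < Δt → Δt ≤ Δt₀ →
        ∀ σ ∈ Icc (0:ℝ) T, ∀ t ∈ Icc (0:ℝ) T, |t - σ| ≤ Δt →
          ∀ x ∈ closure Ω, ∀ ξ : EuclideanSpace ℝ (Fin N × Fin n),
            ‖(κ + ‖ξ‖) ^ ((p (t, x) - 2) / 2) • ξ -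
                (κ + ‖ξ‖) ^ ((p (σ, x) - 2) / 2) • ξ‖ ≤
              cs * Δt ^ αt * (1 + ‖ξ‖) ^ (s * p (t, x) / 2) := by
  set e := pminus * min (s - 1) 1 / 2 with he_def
  have he : 0 < e := by have := lt_min (sub_pos.2 hs) one_pos; positivity
  have hpm₀ : 0 ≤ pminus := by linarith
  have he₁ : 2 * e ≤ pminus * (s - 1) := by
    linarith [he_def, mul_le_mul_of_nonneg_left (min_le_left (s - 1) 1) hpm₀]
  have he₂ : 2 * e ≤ pminus := by
    linarith [he_def, mul_le_mul_of_nonneg_left (min_le_right (s - 1) 1) hpm₀]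
  obtain ⟨Δt₀, hΔt₀, hΔt₀1, hpow⟩ :=
    exists_pos_lt_one_forall_rpow_le hαt.1 (show 0 < e / (c₀ + 1) by positivity)
  refine ⟨(c₀ + 1) / e * (1 + κ) ^ (s * pplus / 2), Δt₀, by positivity, hΔt₀, hΔt₀1, ?_⟩
  intro Δt hΔt hΔtΔt₀ σ hσ t ht htσ x hx ξ
  obtain ⟨hpt, hpt'⟩ := hbounds (t, x) ⟨ht, hx⟩
  have hΔtpow : Δt ^ αt ≤ e / (c₀ + 1) := hpow Δt hΔt.le hΔtΔt₀
  have hp : |p (t, x) - p (σ, x)| ≤ (c₀ + 1) * Δt ^ αt := by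
    calc |p (t, x) - p (σ, x)| ≤ c₀ * (|t - σ| ^ αt + ‖x - x‖ ^ αx) := hHolder t ht σ hσ x hx x hx
      _ = c₀ * |t - σ| ^ αt := by rw [sub_self, norm_zero, zero_rpow hαx.1.ne', add_zero]
      _ ≤ (c₀ + 1) * Δt ^ αt := by gcongr; exacts [by linarith, hαt.1.le]
  have hpe : |p (t, x) - p (σ, x)| ≤ e := by
    calc _ ≤ (c₀ + 1) * Δt ^ αt := hp
      _ ≤ (c₀ + 1) * (e / (c₀ + 1)) := by gcongr
      _ = e := by field_simp
  calc _ ≤ |p (t, x) - p (σ, x)| / e * (1 + κ + ‖ξ‖) ^ (p (t, x) / 2 + e) :=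
        norm_rpow_smul_sub_rpow_smul_le hκ he hpe (by linarith) ξ
    _ ≤ (c₀ + 1) * Δt ^ αt / e * ((1 + κ) ^ (s * pplus / 2) * (1 + ‖ξ‖) ^ (s * p (t, x) / 2)) := by
        gcongr
        exact one_add_add_rpow_le hκ (norm_nonneg ξ) (by linarith) (by nlinarith) (by nlinarith)
    _ = _ := by ring
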